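/- Let n ≥ 2 be an integer and let H be any digraph. Then the dichromatic number of the lexicographic product of the dicycle C⃗_n by H equals χ_a(H) + ⌈χ_a(H) / (n−1)⌉ (where ⌈·⌉ denotes the ceiling of the rational division). -/

import Mathlib

/-- A directed cycle in the digraph with arc relation `Adj`: a list of at least two
distinct vertices with an arc between consecutive vertices and an arc from the last
vertex back to the first. -/
def IsDicycle {V : Type*} (Adj : V → V → Prop) (l : List V) : Prop :=
  2 ≤ l.length ∧ l.Nodup ∧ l.Chain' Adj ∧
    ∀ h : l ≠ [], Adj (l.getLast h) (l.head h)

/-- A set of vertices is acyclic if the induced subdigraph contains no directed cycle. -/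
def AcyclicSet {V : Type*} (Adj : V → V → Prop) (S : Set V) : Prop :=
  ¬ ∃ l : List V, (∀ v ∈ l, v ∈ S) ∧ IsDicycle Adj l

/-- A coloring is acyclic if every color class is an acyclic set. -/
def IsAcyclicColoring {V C : Type*} (Adj : V → V → Prop) (f : V → C) : Prop :=
  ∀ c : C, AcyclicSet Adj (f ⁻¹' {c})

/-- The dichromatic number: the least `k` admitting an acyclic `k`-coloring. -/
noncomputable def dichromaticNumber {V : Type*} (Adj : V → V → Prop) : ℕ :=
  sInf {k : ℕ | ∃ f : V → Fin k, IsAcyclicColoring Adj f}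

/-- Cartesian product of digraphs. -/
def cartAdj {V W : Type*} (GA : V → V → Prop) (HA : W → W → Prop) :
    V × W → V × W → Prop :=
  fun p q => (p.1 = q.1 ∧ HA p.2 q.2) ∨ (GA p.1 q.1 ∧ p.2 = q.2)

/-- Direct product of digraphs. -/
def directAdj {V W : Type*} (GA : V → V → Prop) (HA : W → W → Prop) :
    V × W → V × W → Prop :=
  fun p q => GA p.1 q.1 ∧ HA p.2 q.2

/-- Strong product of digraphs. -/
def strongAdj {V W : Type*} (GA : V → V → Prop) (HA : W → W → Prop) :
    V × W → V × W → Prop :=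
  fun p q => (p.1 = q.1 ∧ HA p.2 q.2) ∨ (GA p.1 q.1 ∧ p.2 = q.2) ∨
    (GA p.1 q.1 ∧ HA p.2 q.2)

/-- Lexicographic product of digraphs. -/
def lexAdj {V W : Type*} (GA : V → V → Prop) (HA : W → W → Prop) :
    V × W → V × W → Prop :=
  fun p q => GA p.1 q.1 ∨ (p.1 = q.1 ∧ HA p.2 q.2)

/-- The dicycle on `n` vertices: arcs `i → i + 1` on `ZMod n`. -/
def dicycleAdj (n : ℕ) : ZMod n → ZMod n → Prop := fun i j => j = i + 1

/-- The complete digraph on `k` vertices. -/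
def completeAdj (k : ℕ) : Fin k → Fin k → Prop := fun i j => i ≠ j

/-!
Let `χ = χ_a(H)`. In an acyclic `m`-coloring of `C⃗_n[H]` every fiber `{i} × H` carries at least
`χ` colors, and no color class meets all `n` fibers, since one vertex from each fiber forms a
dicycle. Double counting the pairs (fiber, color occurring in it) gives `n χ ≤ m (n - 1)`.
Conversely, if `n χ ≤ m (n - 1)`, then coloring `(i, x)` by `⌊(n f(x) + i) / (n - 1)⌋`, for an
acyclic `χ`-coloring `f` of `H`, is an acyclic `m`-coloring. The least such `m` is
`χ + ⌈χ / (n - 1)⌉`.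
-/

open Finset Function

section Coloring

variable {V C C' : Type*} {Adj : V → V → Prop}

theorem acyclicSet_of_subsingleton {S : Set V} (hS : S.Subsingleton) : AcyclicSet Adj S := by
  rintro ⟨l, hmem, hlen, hnd, -⟩
  match l, hlen, hnd, hmem with
  | a :: b :: _, _, hnd, hmem =>
    have hab : a = b := hS (hmem a (by simp)) (hmem b (by simp))
    exact (List.nodup_cons.1 hnd).1 (by simp [hab])

theorem isAcyclicColoring_comp_iff {f : V → C} {g : C → C'} (hg : Injective g) :
    IsAcyclicColoring Adj (g ∘ f) ↔ IsAcyclicColoring Adj f := by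
  have hfiber : ∀ c, (g ∘ f) ⁻¹' {g c} = f ⁻¹' {c} := fun c => by ext; simp [hg.eq_iff]
  refine ⟨fun h c => hfiber c ▸ h (g c), fun h c => ?_⟩
  by_cases hc : c ∈ Set.range g
  · obtain ⟨d, rfl⟩ := hc
    exact hfiber d ▸ h d
  · exact acyclicSet_of_subsingleton fun v hv => absurd ⟨f v, hv⟩ hc

theorem IsAcyclicColoring.of_injective {f : V → C} (hf : Injective f) :
    IsAcyclicColoring Adj f :=
  fun _ => acyclicSet_of_subsingleton (Set.subsingleton_singleton.preimage hf)

theorem exists_isAcyclicColoring_dichromaticNumber [Fintype V] (Adj : V → V → Prop) :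
    ∃ f : V → Fin (dichromaticNumber Adj), IsAcyclicColoring Adj f :=
  Nat.sInf_mem (s := {k | ∃ f : V → Fin k, IsAcyclicColoring Adj f})
    ⟨Fintype.card V, Fintype.equivFin V, .of_injective (Fintype.equivFin V).injective⟩

theorem dichromaticNumber_le_of_forall_lt {f : V → ℕ} (hf : IsAcyclicColoring Adj f) {m : ℕ}
    (hm : ∀ v, f v < m) : dichromaticNumber Adj ≤ m :=
  Nat.sInf_le ⟨fun v => ⟨f v, hm v⟩, (isAcyclicColoring_comp_iff Fin.val_injective).1 hf⟩

theorem dichromaticNumber_le_card_image [Fintype V] [DecidableEq C] {f : V → C}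
    (hf : IsAcyclicColoring Adj f) : dichromaticNumber Adj ≤ #(univ.image f) := by
  let e := (univ.image f).equivFin
  have hf' : IsAcyclicColoring Adj
      (Fin.val ∘ e ∘ fun v => ⟨f v, mem_image_of_mem f (mem_univ v)⟩) :=
    (isAcyclicColoring_comp_iff (Fin.val_injective.comp e.injective)).2
      ((isAcyclicColoring_comp_iff Subtype.val_injective).1 hf)
  exact dichromaticNumber_le_of_forall_lt hf' fun v => Fin.is_lt _

end Coloring

section Dicycle

variable {V V' : Type*} {Adj : V → V → Prop} {Adj' : V' → V' → Prop} {l : List V}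

theorem IsDicycle.map (hl : IsDicycle Adj l) (g : V → V')
    (hinj : ∀ u ∈ l, ∀ v ∈ l, g u = g v → u = v)
    (hhom : ∀ u ∈ l, ∀ v ∈ l, Adj u v → Adj' (g u) (g v)) :
    IsDicycle Adj' (l.map g) := by
  obtain ⟨hlen, hnd, hchain, hwrap⟩ := hl
  refine ⟨by simpa using hlen, hnd.map_on hinj, List.isChain_map g |>.2
    (hchain.imp_of_mem_imp fun u v hu hv => hhom u hu v hv), fun h => ?_⟩
  have hne : l ≠ [] := by simpa using h
  rw [List.getLast_map, List.head_map]
  exact hhom _ (List.getLast_mem hne) _ (List.head_mem hne) (hwrap hne)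

theorem AcyclicSet.preimage {S : Set V'} (hS : AcyclicSet Adj' S) {g : V → V'} (hg : Injective g)
    (hhom : ∀ u v, Adj u v → Adj' (g u) (g v)) : AcyclicSet Adj (g ⁻¹' S) :=
  fun ⟨l, hmem, hl⟩ => hS ⟨l.map g, by simpa using hmem,
    hl.map g (fun _ _ _ _ h => hg h) (fun u _ v _ => hhom u v)⟩

theorem IsAcyclicColoring.comp {C : Type*} {F : V' → C} (hF : IsAcyclicColoring Adj' F)
    {g : V → V'} (hg : Injective g) (hhom : ∀ u v, Adj u v → Adj' (g u) (g v)) :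
    IsAcyclicColoring Adj (F ∘ g) :=
  fun c => (hF c).preimage hg hhom

theorem IsDicycle.eq_of_monotone {α : Type*} [PartialOrder α] (hl : IsDicycle Adj l) {φ : V → α}
    (hφ : ∀ u ∈ l, ∀ v ∈ l, Adj u v → φ u ≤ φ v) : ∀ u ∈ l, ∀ v ∈ l, φ u = φ v := by
  obtain ⟨hlen, -, hchain, hwrap⟩ := hl
  have hne : l ≠ [] := List.ne_nil_of_length_pos (by omega)
  have hsorted : ∀ (i j : ℕ) (hi : i < l.length) (hj : j < l.length), i ≤ j → φ l[i] ≤ φ l[j] := by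
    have := List.isChain_iff_pairwise.1 (List.isChain_map φ |>.2
      (hchain.imp_of_mem_imp fun u v hu hv => hφ u hu v hv))
    rw [List.pairwise_map, List.pairwise_iff_getElem] at this
    intro i j hi hj hij
    rcases hij.lt_or_eq with hij | rfl
    · exact this i j hi hj hij
    · rfl
  have hback : φ l[l.length - 1] ≤ φ l[0] := by
    simpa [List.getLast_eq_getElem, List.head_eq_getElem] using
      hφ _ (List.getLast_mem hne) _ (List.head_mem hne) (hwrap hne)
  have hconst : ∀ (i : ℕ) (hi : i < l.length), φ l[i] = φ l[0] := fun i hi =>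
    le_antisymm ((hsorted i _ hi (by omega) (by omega)).trans hback)
      (hsorted 0 i (by omega) hi (by omega))
  intro u hu v hv
  obtain ⟨i, hi, rfl⟩ := List.mem_iff_getElem.1 hu
  obtain ⟨j, hj, rfl⟩ := List.mem_iff_getElem.1 hv
  rw [hconst i hi, hconst j hj]

end Dicycle

theorem ZMod.val_le_val_add_one {n : ℕ} [NeZero n] {a : ZMod n} (h : a + 1 ≠ 0) :
    a.val ≤ (a + 1).val := by
  have hone : (1 : ZMod n).val ≤ 1 := by rw [ZMod.val_one_eq_one_mod]; exact Nat.mod_le 1 n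
  rcases lt_or_ge (a.val + (1 : ZMod n).val) n with hlt | hge
  · rw [ZMod.val_add_of_lt hlt]
    omega
  · have hwrap := ZMod.val_add_val_of_le hge
    have hzero : (a + 1).val = 0 := by have := a.val_lt; omega
    exact absurd ((ZMod.val_eq_zero _).1 hzero) h

section LexDicycle

variable {W : Type*} {n : ℕ} {HA : W → W → Prop}

theorem not_dicycleAdj_self (hn : 2 ≤ n) (i : ZMod n) : ¬ dicycleAdj n i i := by
  have : Fact (1 < n) := ⟨hn⟩
  exact fun h => one_ne_zero (left_eq_add.1 h)

theorem isDicycle_range_dicycleAdj (hn : 2 ≤ n) :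
    IsDicycle (dicycleAdj n) ((List.range n).map (Nat.cast : ℕ → ZMod n)) := by
  refine ⟨by simpa using hn, ?_, ?_, fun _ => ?_⟩
  · refine List.nodup_range.map_on fun a ha b hb hab => ?_
    rw [List.mem_range] at ha hb
    rwa [ZMod.natCast_eq_natCast_iff', Nat.mod_eq_of_lt ha, Nat.mod_eq_of_lt hb] at hab
  · obtain ⟨k, rfl⟩ : ∃ k, n = k + 1 := ⟨n - 1, by omega⟩
    show List.IsChain _ _
    rw [List.isChain_map, List.isChain_range_succ]
    intro m _
    simp [dicycleAdj]
  · simp [List.getLast_map, List.head_map, List.getLast_range, List.head_range, dicycleAdj,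
      Nat.cast_sub (by omega : 1 ≤ n)]

theorem not_acyclicSet_lexAdj_dicycleAdj (hn : 2 ≤ n) {S : Set (ZMod n × W)}
    (hS : ∀ i, ∃ x, (i, x) ∈ S) : ¬ AcyclicSet (lexAdj (dicycleAdj n) HA) S := by
  choose g hg using hS
  exact fun hacyclic => hacyclic ⟨_, by simp [hg],
    (isDicycle_range_dicycleAdj hn).map (fun i => (i, g i))
      (fun _ _ _ _ h => congrArg Prod.fst h) (fun _ _ _ _ h => Or.inl h)⟩

theorem IsDicycle.fst_eq_of_forall_fst_ne [NeZero n] {l : List (ZMod n × W)}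
    (hl : IsDicycle (lexAdj (dicycleAdj n) HA) l) (r : ZMod n) (hr : ∀ v ∈ l, v.1 ≠ r) :
    ∀ u ∈ l, ∀ v ∈ l, u.1 = v.1 := by
  -- `(v.1 - r).val` goes up by one along an arc between fibers and is constant within a fiber.
  have hφ := hl.eq_of_monotone (φ := fun v => (v.1 - r).val) fun u _ v hv huv => by
    rcases huv with huv | ⟨huv, -⟩
    · have hshift : v.1 - r = u.1 - r + 1 := by rw [huv]; ring
      rw [hshift]
      exact ZMod.val_le_val_add_one (hshift ▸ sub_ne_zero.2 (hr v hv))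
    · simp [huv]
  intro u hu v hv
  simpa using ZMod.val_injective n (hφ u hu v hv)

theorem IsDicycle.map_snd_of_fst_eq {V : Type*} {G : V → V → Prop} (hG : ∀ a, ¬ G a a)
    {l : List (V × W)} (hl : IsDicycle (lexAdj G HA) l) (hfst : ∀ u ∈ l, ∀ v ∈ l, u.1 = v.1) :
    IsDicycle HA (l.map Prod.snd) :=
  hl.map Prod.snd (fun u hu v hv h => Prod.ext (hfst u hu v hv) h) fun u hu v hv huv =>
    (huv.resolve_left fun h => hG v.1 (by rwa [hfst u hu v hv] at h)).2

/-- A color class is a window of `n - 1` consecutive values of `n f(x) + i`: it misses some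
fiber, and within one fiber it sees only one color of `f`. -/
def lexDicycleColoring (n : ℕ) (f : W → ℕ) (p : ZMod n × W) : ℕ :=
  (n * f p.2 + p.1.val) / (n - 1)

theorem isAcyclicColoring_lexDicycleColoring (hn : 2 ≤ n) {f : W → ℕ}
    (hf : IsAcyclicColoring HA f) :
    IsAcyclicColoring (lexAdj (dicycleAdj n) HA) (lexDicycleColoring n f) := by
  have : NeZero n := ⟨by omega⟩
  rintro c ⟨l, hmem, hl⟩
  set window := Ico (c * (n - 1)) (c * (n - 1) + (n - 1))
  have hwindow : ∀ v ∈ l, n * f v.2 + v.1.val ∈ window := fun v hv => by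
    rw [mem_Ico, ← show lexDicycleColoring n f v = c from hmem v hv]
    exact ⟨Nat.div_mul_le_self _ _, Nat.lt_div_mul_add (by omega)⟩
  obtain ⟨r, -, hr⟩ := exists_mem_notMem_of_card_lt_card (t := univ)
    (s := window.image (Nat.cast : ℕ → ZMod n)) <| calc
      _ ≤ #window := card_image_le
      _ < n := by rw [Nat.card_Ico]; omega
      _ = _ := (ZMod.card n).symm
  have hfst := hl.fst_eq_of_forall_fst_ne r fun v hv hvr =>
    hr (mem_image.2 ⟨_, hwindow v hv, by simp [hvr]⟩)
  have hsnd : ∀ u ∈ l, ∀ v ∈ l, f u.2 = f v.2 := by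
    intro u hu v hv
    have hu' := mem_Ico.1 (hwindow u hu)
    have hv' := mem_Ico.1 (hwindow v hv)
    rw [hfst u hu v hv] at hu'
    have h₁ : n * f u.2 < n * (f v.2 + 1) := by rw [Nat.mul_succ]; omega
    have h₂ : n * f v.2 < n * (f u.2 + 1) := by rw [Nat.mul_succ]; omega
    have := Nat.lt_of_mul_lt_mul_left h₁
    have := Nat.lt_of_mul_lt_mul_left h₂
    omega
  obtain ⟨v₀, hv₀⟩ := List.exists_mem_of_length_pos (l := l) (by have := hl.1; omega)
  exact hf (f v₀.2) ⟨l.map Prod.snd, fun x hx => by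
      obtain ⟨v, hv, rfl⟩ := List.mem_map.1 hx
      exact hsnd v hv v₀ hv₀,
    hl.map_snd_of_fst_eq (not_dicycleAdj_self hn) hfst⟩

theorem lexDicycleColoring_lt (hn : 2 ≤ n) {f : W → ℕ} {k m : ℕ} (hf : ∀ x, f x < k)
    (hkm : n * k ≤ m * (n - 1)) (p : ZMod n × W) : lexDicycleColoring n f p < m := by
  have : NeZero n := ⟨by omega⟩
  have hfk := Nat.mul_le_mul_left n (hf p.2)
  have := p.1.val_lt
  rw [lexDicycleColoring, Nat.div_lt_iff_lt_mul (by omega)]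
  rw [Nat.mul_succ] at hfk
  omega

theorem mul_dichromaticNumber_le [Fintype W] (hn : 2 ≤ n) {m : ℕ} {F : ZMod n × W → Fin m}
    (hF : IsAcyclicColoring (lexAdj (dicycleAdj n) HA) F) :
    n * dichromaticNumber HA ≤ m * (n - 1) := by
  classical
  have : NeZero n := ⟨by omega⟩
  let Occurs : ZMod n → Fin m → Prop := fun i c => ∃ x, F (i, x) = c
  have hfiber : ∀ i, dichromaticNumber HA ≤ #(univ.bipartiteAbove Occurs i) := fun i => by
    convert dichromaticNumber_le_card_image
      (hF.comp (Prod.mk_right_injective i) fun _ _ h => Or.inr ⟨rfl, h⟩) using 2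
    ext c
    simp [bipartiteAbove, Occurs]
  have hcolor : ∀ c, #(univ.bipartiteBelow Occurs c) ≤ n - 1 := fun c => by
    obtain ⟨i, hi⟩ : ∃ i, ¬ Occurs i c := by
      by_contra! h
      exact not_acyclicSet_lexAdj_dicycleAdj hn h (hF c)
    have := card_lt_univ_of_notMem (s := univ.bipartiteBelow Occurs c) (x := i)
      (by simp [bipartiteBelow, hi])
    rw [ZMod.card] at this
    omega
  calc n * dichromaticNumber HA = ∑ _i : ZMod n, dichromaticNumber HA := by simp
    _ ≤ ∑ i, #(univ.bipartiteAbove Occurs i) := sum_le_sum fun i _ => hfiber i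
    _ = ∑ c, #(univ.bipartiteBelow Occurs c) :=
      sum_card_bipartiteAbove_eq_sum_card_bipartiteBelow Occurs
    _ ≤ ∑ _c : Fin m, (n - 1) := sum_le_sum fun c _ => hcolor c
    _ = m * (n - 1) := by simp

theorem dichromaticNumber_lexAdj_dicycleAdj_le_iff [Fintype W] (hn : 2 ≤ n) (m : ℕ) :
    dichromaticNumber (lexAdj (dicycleAdj n) HA) ≤ m ↔
      n * dichromaticNumber HA ≤ m * (n - 1) := by
  have : NeZero n := ⟨by omega⟩
  constructor
  · intro hm
    obtain ⟨F, hF⟩ := exists_isAcyclicColoring_dichromaticNumber (lexAdj (dicycleAdj n) HA)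
    exact (mul_dichromaticNumber_le hn hF).trans (Nat.mul_le_mul_right _ hm)
  · intro hkm
    obtain ⟨f, hf⟩ := exists_isAcyclicColoring_dichromaticNumber HA
    exact dichromaticNumber_le_of_forall_lt
      (isAcyclicColoring_lexDicycleColoring hn
        ((isAcyclicColoring_comp_iff Fin.val_injective).2 hf))
      (lexDicycleColoring_lt hn (fun x => (f x).is_lt) hkm)

end LexDicycle

theorem natCast_eq_add_ceil_div {χ k d : ℕ} (hd : 0 < d)
    (h : ∀ m, χ ≤ m ↔ (d + 1) * k ≤ m * d) : (χ : ℤ) = k + ⌈(k : ℚ) / d⌉ := by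
  obtain ⟨q, hq⟩ := Int.eq_ofNat_of_zero_le (Int.ceil_nonneg (by positivity : (0 : ℚ) ≤ k / d))
  have hqd : ∀ m : ℕ, q ≤ m ↔ k ≤ m * d := fun m => by
    rw [← Int.ofNat_le, ← hq, Int.ceil_le, div_le_iff₀ (by exact_mod_cast hd)]
    norm_cast
  rw [hq]
  norm_cast
  refine eq_of_forall_ge_iff fun m => (h m).trans ?_
  rcases le_or_gt k m with hkm | hmk
  · obtain ⟨j, rfl⟩ := Nat.exists_eq_add_of_le hkm
    rw [Nat.add_le_add_iff_left, hqd, add_mul, add_mul, one_mul, mul_comm d k]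
    omega
  · refine iff_of_false (fun h' => ?_) (by omega)
    nlinarith

theorem stmt14_general {W : Type*} [Fintype W] (n : ℕ) (hn : 2 ≤ n)
    (HA : W → W → Prop) :
    (dichromaticNumber (lexAdj (dicycleAdj n) HA) : ℤ) =
      (dichromaticNumber HA : ℤ) +
        ⌈(dichromaticNumber HA : ℚ) / ((n : ℚ) - 1)⌉ := by
  have key := natCast_eq_add_ceil_div (d := n - 1) (by omega) fun m => by
    rw [dichromaticNumber_lexAdj_dicycleAdj_le_iff (HA := HA) hn,
      Nat.sub_add_cancel (by omega : 1 ≤ n)]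
  rwa [Nat.cast_sub (by omega : 1 ≤ n), Nat.cast_one] at key

theorem stmt14 {W : Type*} [Fintype W] (n : ℕ) (hn : 2 ≤ n)
    (HA : W → W → Prop) (hH : Irreflexive HA) :
    (dichromaticNumber (lexAdj (dicycleAdj n) HA) : ℤ) =
      (dichromaticNumber HA : ℤ) +
        ⌈(dichromaticNumber HA : ℚ) / ((n : ℚ) - 1)⌉ :=
  stmt14_general n hn HA
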